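/- arXiv:2112.09376 — 4 statements merged into one kernel-verified Lean document; each statement's English description precedes it below -/
import Mathlib

section
/- Equivalently to the Fano-type bound for Rényi entropy: for α > 1 and any distribution p on k outcomes with θ = max_i p_i, one has H_α(p) ≤ (1/(1-α))·log₂(θᵅ + (1-θ)ᵅ/(k-1)^(α-1)). -/
/-- Fano-type bound for the Rényi entropy of order `α > 1`:
`H_α(p) ≤ (1/(1-α)) log₂ (θ^α + (1-θ)^α/(k-1)^(α-1))` where `θ = max_i p_i`. -/
theorem renyi_entropy_fano_bound (k : ℕ) (hk : 2 ≤ k) (p : Fin k → ℝ)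
    (hp0 : ∀ i, 0 ≤ p i) (hp1 : ∑ i, p i = 1)
    (α : ℝ) (hα : 1 < α) (θ : ℝ) (hθ : θ = ⨆ i, p i) :
    (1 / (1 - α)) * Real.logb 2 (∑ i, p i ^ α)
      ≤ (1 / (1 - α)) * Real.logb 2 (θ ^ α + (1 - θ) ^ α / ((k : ℝ) - 1) ^ (α - 1)) := by
  have : Nonempty (Fin k) := ⟨⟨0, by omega⟩⟩
  obtain ⟨j, hj⟩ := Finite.exists_max p
  have hθj : θ = p j := by
    rw [hθ]
    exact le_antisymm (ciSup_le hj) (le_ciSup (Set.finite_range p).bddAbove j)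
  have hθ1 : θ ≤ 1 := by
    rw [hθj, ← hp1]
    exact Finset.single_le_sum (fun i _ => hp0 i) (Finset.mem_univ j)
  have hθ0 : 0 < θ := by
    rcases lt_or_ge 0 θ with h | h
    · exact h
    · exfalso
      have : ∑ i, p i ≤ 0 := Finset.sum_nonpos (fun i _ => (hj i).trans (hθj ▸ h))
      linarith
  set s : Finset (Fin k) := Finset.univ.erase j with hs
  have hK : (0:ℝ) < (k:ℝ) - 1 := by
    have : (2:ℝ) ≤ (k:ℝ) := by exact_mod_cast hk
    linarith
  set K : ℝ := (k:ℝ) - 1 with hKdef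
  have hcard : (s.card : ℝ) = K := by
    rw [hs, Finset.card_erase_of_mem (Finset.mem_univ j), Finset.card_univ, Fintype.card_fin]
    rw [Nat.cast_sub (by omega)]
    simp [hKdef]
  have hsum_s : ∑ i ∈ s, p i = 1 - θ := by
    have := Finset.add_sum_erase Finset.univ p (Finset.mem_univ j)
    rw [hp1] at this
    rw [hθj]; linarith
  have hsplit : ∑ i, p i ^ α = θ ^ α + ∑ i ∈ s, p i ^ α := by
    rw [hθj]
    exact (Finset.add_sum_erase Finset.univ (fun i => p i ^ α) (Finset.mem_univ j)).symm
  -- power mean inequality on s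
  have hpm := Real.rpow_arith_mean_le_arith_mean_rpow s (fun _ => 1 / K) p
      (fun i _ => by positivity) (by simp [Finset.sum_const, hcard]; field_simp)
      (fun i _ => hp0 i) hα.le
  have hL : (∑ i ∈ s, (1 / K) * p i) = (1 - θ) / K := by
    rw [← Finset.mul_sum, hsum_s]; ring
  have hR : (∑ i ∈ s, (1 / K) * p i ^ α) = (1 / K) * ∑ i ∈ s, p i ^ α := by
    rw [Finset.mul_sum]
  rw [hL, hR] at hpm
  have h1θ : 0 ≤ 1 - θ := by linarith
  have hdiv : ((1 - θ) / K) ^ α = (1 - θ) ^ α / K ^ α :=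
    Real.div_rpow h1θ hK.le α
  have hKα : K ^ α = K ^ (α - 1) * K := by
    rw [← Real.rpow_add_one hK.ne' (α - 1)]; ring_nf
  have key : (1 - θ) ^ α / K ^ (α - 1) ≤ ∑ i ∈ s, p i ^ α := by
    have h2 : ((1 - θ) / K) ^ α * K ≤ ∑ i ∈ s, p i ^ α := by
      calc ((1 - θ) / K) ^ α * K ≤ (1 / K * ∑ i ∈ s, p i ^ α) * K :=
            mul_le_mul_of_nonneg_right hpm hK.le
        _ = ∑ i ∈ s, p i ^ α := by field_simp
    calc (1 - θ) ^ α / K ^ (α - 1) = ((1 - θ) / K) ^ α * K := by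
          rw [hdiv, hKα]; field_simp
      _ ≤ _ := h2
  have hmain : θ ^ α + (1 - θ) ^ α / K ^ (α - 1) ≤ ∑ i, p i ^ α := by
    rw [hsplit]; linarith
  have hpos : 0 < θ ^ α + (1 - θ) ^ α / K ^ (α - 1) := by
    have h1 : 0 < θ ^ α := Real.rpow_pos_of_pos hθ0 α
    have h2 : 0 ≤ (1 - θ) ^ α / K ^ (α - 1) := by positivity
    linarith
  have hlog := (Real.logb_le_logb (b := 2) one_lt_two hpos
    (lt_of_lt_of_le hpos hmain)).mpr hmain
  have hneg : 1 / (1 - α) ≤ 0 := by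
    apply div_nonpos_of_nonneg_of_nonpos zero_le_one; linarith
  exact mul_le_mul_of_nonpos_left hlog hneg
end

section
/- Let ψ ∈ (1/(n+1), 1/n] for a positive integer n, and let p_INU(ψ) be the inverted near-uniform distribution with parameter ψ. Then ⌊1/ψ⌋ = ⌊1/M₂(p_INU(ψ))⌋ = n, where M₂ denotes the collision probability (sum of squared probabilities). -/
/-- For `ψ ∈ (1/(n+1), 1/n]`, the inverted near-uniform distribution satisfies
`⌊1/ψ⌋ = ⌊1/M₂(p_INU(ψ))⌋ = n`, where `M₂(p_INU(ψ)) = ⌊1/ψ⌋ψ² + (1 - ⌊1/ψ⌋ψ)²`. -/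
theorem floor_inv_collision_inverted_near_uniform (n : ℕ) (hn : 0 < n) (ψ : ℝ)
    (hψ : ψ ∈ Set.Ioc (1 / ((n : ℝ) + 1)) (1 / (n : ℝ))) :
    ⌊1 / ψ⌋₊ = n ∧
    ⌊1 / ((⌊1 / ψ⌋₊ : ℝ) * ψ ^ 2 + (1 - (⌊1 / ψ⌋₊ : ℝ) * ψ) ^ 2)⌋₊ = n := by
  obtain ⟨hlo, hhi⟩ := hψ
  have hn0 : (0 : ℝ) < n := by exact_mod_cast hn
  have hn1 : (0 : ℝ) < (n : ℝ) + 1 := by linarith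
  have hψ0 : 0 < ψ := lt_trans (by positivity) hlo
  have h1 : (n : ℝ) ≤ 1 / ψ := by
    rw [le_div_iff₀ hψ0]
    calc (n : ℝ) * ψ ≤ (n : ℝ) * (1 / n) := by
          exact mul_le_mul_of_nonneg_left hhi (le_of_lt hn0)
      _ = 1 := by field_simp
  have h2 : 1 / ψ < (n : ℝ) + 1 := by
    rw [div_lt_iff₀ hψ0]
    have := (div_lt_iff₀ hn1).mp hlo
    nlinarith
  have hfl : ⌊1 / ψ⌋₊ = n := by
    rw [Nat.floor_eq_iff (by positivity)]
    exact ⟨by exact_mod_cast h1, by exact_mod_cast h2⟩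
  refine ⟨hfl, ?_⟩
  rw [hfl]
  set M : ℝ := (n : ℝ) * ψ ^ 2 + (1 - (n : ℝ) * ψ) ^ 2 with hMdef
  have hψle : (n : ℝ) * ψ ≤ 1 := by
    calc (n : ℝ) * ψ ≤ (n : ℝ) * (1 / n) := by
          exact mul_le_mul_of_nonneg_left hhi (le_of_lt hn0)
      _ = 1 := by field_simp
  have hψgt : (n : ℝ) / ((n : ℝ) + 1) < (n : ℝ) * ψ := by
    rw [div_lt_iff₀ hn1]
    have := (div_lt_iff₀ hn1).mp hlo
    nlinarith
  have h' : 0 < ψ * ((n : ℝ) + 1) - 1 := by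
    have := (div_lt_iff₀ hn1).mp hlo
    linarith
  have hkey : (n : ℝ) * (1 - (n : ℝ) * ψ) < 1 := by
    nlinarith [mul_pos (mul_pos hn0 hn0) h', mul_pos hn0 h']
  have hM1 : M ≤ 1 / n := by
    rw [le_div_iff₀ hn0, hMdef]
    nlinarith [mul_nonneg (sub_nonneg.2 hψle) (by nlinarith : (0:ℝ) ≤ 1 + (n : ℝ) * ψ - (n : ℝ) * (1 - (n : ℝ) * ψ))]
  have hd : 0 < ((n : ℝ) + 1) * ((n : ℝ) * ψ) - n := by
    nlinarith [mul_pos hn0 h']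
  have hM2 : 1 / ((n : ℝ) + 1) < M := by
    rw [div_lt_iff₀ hn1, hMdef]
    nlinarith [mul_pos hd hd, mul_pos hn0 hn1]
  have hM0 : 0 < M := lt_trans (by positivity) hM2
  have g1 : (n : ℝ) ≤ 1 / M := by
    rw [le_div_iff₀ hM0]
    calc (n : ℝ) * M ≤ (n : ℝ) * (1 / n) := mul_le_mul_of_nonneg_left hM1 (le_of_lt hn0)
      _ = 1 := by field_simp
  have g2 : 1 / M < (n : ℝ) + 1 := by
    rw [div_lt_iff₀ hM0]
    have := (div_lt_iff₀ hn1).mp hM2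
    nlinarith
  rw [Nat.floor_eq_iff (by positivity)]
  exact ⟨by exact_mod_cast g1, by exact_mod_cast g2⟩
end

section
/- Let p be any probability distribution on k outcomes with collision probability p_c = Σᵢ p_i², let n = ⌊1/p_c⌋, and let θ = max_i p_i. Then ψ ≤ θ ≤ θ̂, where ψ = (√(n(p_c(n+1) - 1)) + n)/(n(n+1)) and θ̂ = (√((k-1)(p_c·k - 1)) + 1)/k. -/
lemma theta_key_exists {ι : Type*} [DecidableEq ι] (θ : ℝ) (hθ : 0 < θ) (p : ι → ℝ)
    (s : Finset ι) :
    (∀ i ∈ s, 0 ≤ p i) → (∀ i ∈ s, p i ≤ θ) →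
    ∃ (m : ℕ) (r : ℝ), 0 ≤ r ∧ r < θ ∧ (∑ i ∈ s, p i) = m * θ + r ∧
      r * (θ - r) ≤ ∑ i ∈ s, p i * (θ - p i) := by
  induction s using Finset.induction_on with
  | empty => exact fun _ _ => ⟨0, 0, le_refl 0, hθ, by simp, by simp⟩
  | @insert a s ha ih =>
    intro h0 h1
    obtain ⟨m, r, hr0, hrθ, hsum, hineq⟩ :=
      ih (fun i hi => h0 i (Finset.mem_insert_of_mem hi))
         (fun i hi => h1 i (Finset.mem_insert_of_mem hi))
    have hx0 : 0 ≤ p a := h0 a (Finset.mem_insert_self a s)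
    have hx1 : p a ≤ θ := h1 a (Finset.mem_insert_self a s)
    rw [Finset.sum_insert ha, Finset.sum_insert ha]
    by_cases hc : r + p a < θ
    · refine ⟨m, r + p a, by linarith, hc, by linarith, ?_⟩
      nlinarith [mul_nonneg hr0 hx0]
    · push_neg at hc
      refine ⟨m + 1, r + p a - θ, by linarith, by linarith, by push_cast; linarith, ?_⟩
      nlinarith [mul_nonneg (by linarith : (0:ℝ) ≤ θ - r) (by linarith : (0:ℝ) ≤ θ - p a)]

/-- Sharp lower and upper bounds on `θ = max_i p_i` for a given collision
probability `p_c` with `n = ⌊1/p_c⌋`: `ψ ≤ θ ≤ θ̂`. -/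
theorem theta_sharp_bounds (k : ℕ) (hk : 2 ≤ k) (p : Fin k → ℝ)
    (hp0 : ∀ i, 0 ≤ p i) (hp1 : ∑ i, p i = 1)
    (pc : ℝ) (hpc : pc = ∑ i, (p i) ^ 2)
    (n : ℕ) (hn : n = ⌊1 / pc⌋₊) (θ : ℝ) (hθ : θ = ⨆ i, p i) :
    (Real.sqrt ((n : ℝ) * (pc * ((n : ℝ) + 1) - 1)) + n) / ((n : ℝ) * ((n : ℝ) + 1)) ≤ θ ∧
    θ ≤ (Real.sqrt (((k : ℝ) - 1) * (pc * k - 1)) + 1) / k := by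
  haveI : Nonempty (Fin k) := ⟨⟨0, by omega⟩⟩
  obtain ⟨j, hj⟩ := Finite.exists_max p
  have hθj : θ = p j := by
    rw [hθ]
    exact le_antisymm (ciSup_le hj) (le_ciSup (Finite.bddAbove_range p) j)
  have hpile : ∀ i, p i ≤ θ := by rw [hθj]; exact hj
  have hθ1 : θ ≤ 1 := by
    rw [hθj, ← hp1]
    exact Finset.single_le_sum (fun i _ => hp0 i) (Finset.mem_univ j)
  have hkpos : (0:ℝ) < k := by positivity
  have hθpos : 0 < θ := by
    by_contra h
    push_neg at h
    have : ∑ i, p i ≤ 0 := Finset.sum_nonpos (fun i _ => le_trans (hpile i) h)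
    linarith
  have hpcθ : pc ≤ θ := by
    rw [hpc]
    calc ∑ i, (p i) ^ 2 ≤ ∑ i, θ * p i := by
          refine Finset.sum_le_sum (fun i _ => ?_)
          rw [sq]
          exact mul_le_mul_of_nonneg_right (hpile i) (hp0 i)
      _ = θ := by rw [← Finset.mul_sum, hp1, mul_one]
  have hpcpos : 0 < pc := by
    have h1 : θ ^ 2 ≤ pc := by
      rw [hpc, hθj]
      exact Finset.single_le_sum (fun i _ => sq_nonneg (p i)) (Finset.mem_univ j)
    nlinarith
  -- key structural bound
  obtain ⟨m, r, hr0, hrθ, hsum, hineq⟩ :=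
    theta_key_exists θ hθpos p Finset.univ (fun i _ => hp0 i) (fun i _ => hpile i)
  rw [hp1] at hsum
  have hsumsplit : ∑ i, p i * (θ - p i) = θ - pc := by
    have h : ∑ i, p i * (θ - p i) = θ * (∑ i, p i) - ∑ i, (p i) ^ 2 := by
      rw [Finset.mul_sum, ← Finset.sum_sub_distrib]
      exact Finset.sum_congr rfl (fun i _ => by ring)
    rw [h, hp1, hpc, mul_one]
  have hpc_le_m : pc ≤ (m:ℝ) * ((m:ℝ) + 1) * θ ^ 2 - 2 * m * θ + 1 := by
    rw [hsumsplit] at hineq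
    nlinarith
  have hm1θ : 1 < ((m:ℝ) + 1) * θ := by nlinarith [hsum, hrθ]
  have hmn : m ≤ n := by
    rw [hn]
    refine Nat.le_floor ?_
    rw [le_div_iff₀ hpcpos]
    calc (m:ℝ) * pc ≤ (m:ℝ) * θ := mul_le_mul_of_nonneg_left hpcθ (Nat.cast_nonneg m)
      _ ≤ 1 := by linarith
  have hmono : ∀ d : ℕ, pc ≤ ((m+d:ℕ):ℝ) * (((m+d:ℕ):ℝ) + 1) * θ ^ 2 - 2 * ((m+d:ℕ):ℝ) * θ + 1 := by
    intro d
    induction d with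
    | zero => simpa using hpc_le_m
    | succ e ih =>
      push_cast at ih ⊢
      have he : (0:ℝ) ≤ (e:ℝ) := Nat.cast_nonneg e
      nlinarith [mul_nonneg he hθpos.le]
  have hpc_le_n : pc ≤ (n:ℝ) * ((n:ℝ) + 1) * θ ^ 2 - 2 * (n:ℝ) * θ + 1 := by
    have := hmono (n - m)
    rwa [Nat.add_sub_cancel' hmn] at this
  have hn1 : (1:ℕ) ≤ n := by
    rw [hn]
    exact Nat.le_floor (by rw [le_div_iff₀ hpcpos]; push_cast; nlinarith)
  have hNpos : (0:ℝ) < (n:ℝ) := by exact_mod_cast Nat.lt_of_lt_of_le Nat.zero_lt_one hn1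
  have hfloorlt : 1 / pc < (n:ℝ) + 1 := by
    rw [hn]; exact_mod_cast Nat.lt_floor_add_one (1 / pc)
  have hpcn1 : 1 < pc * ((n:ℝ) + 1) := by
    have := (div_lt_iff₀ hpcpos).mp hfloorlt
    nlinarith
  have hθn1 : 1 ≤ ((n:ℝ) + 1) * θ := by
    have h2 : pc * ((n:ℝ) + 1) ≤ θ * ((n:ℝ) + 1) :=
      mul_le_mul_of_nonneg_right hpcθ (by positivity)
    linarith
  constructor
  · -- lower bound
    have hB : (0:ℝ) ≤ (n:ℝ) * ((n:ℝ) + 1) * θ - (n:ℝ) := by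
      have h2 : (n:ℝ) * 1 ≤ (n:ℝ) * (((n:ℝ) + 1) * θ) :=
        mul_le_mul_of_nonneg_left hθn1 hNpos.le
      linarith
    have hA : (n:ℝ) * (pc * ((n:ℝ) + 1) - 1) ≤ ((n:ℝ) * ((n:ℝ) + 1) * θ - (n:ℝ)) ^ 2 := by
      have h2 : (n:ℝ) * ((n:ℝ) + 1) * pc ≤
          (n:ℝ) * ((n:ℝ) + 1) * ((n:ℝ) * ((n:ℝ) + 1) * θ ^ 2 - 2 * (n:ℝ) * θ + 1) :=
        mul_le_mul_of_nonneg_left hpc_le_n (by positivity)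
      linarith
    have hs : Real.sqrt ((n:ℝ) * (pc * ((n:ℝ) + 1) - 1)) ≤ (n:ℝ) * ((n:ℝ) + 1) * θ - (n:ℝ) := by
      calc Real.sqrt ((n:ℝ) * (pc * ((n:ℝ) + 1) - 1))
          ≤ Real.sqrt (((n:ℝ) * ((n:ℝ) + 1) * θ - (n:ℝ)) ^ 2) := Real.sqrt_le_sqrt hA
        _ = (n:ℝ) * ((n:ℝ) + 1) * θ - (n:ℝ) := Real.sqrt_sq hB
    rw [div_le_iff₀ (by positivity : (0:ℝ) < (n:ℝ) * ((n:ℝ) + 1))]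
    linarith [hs]
  · -- upper bound
    have hmem : j ∈ (Finset.univ : Finset (Fin k)) := Finset.mem_univ j
    have hcard : ((Finset.univ.erase j).card : ℝ) = (k:ℝ) - 1 := by
      rw [Finset.card_erase_of_mem hmem, Finset.card_univ, Fintype.card_fin]
      have : (1:ℕ) ≤ k := by omega
      push_cast [this]
      ring
    have hsum1 : ∑ i ∈ Finset.univ.erase j, p i = 1 - θ := by
      have := Finset.sum_erase_add Finset.univ p hmem
      rw [hp1] at this
      rw [hθj]; linarith
    have hsum2 : ∑ i ∈ Finset.univ.erase j, (p i) ^ 2 = pc - θ ^ 2 := by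
      have := Finset.sum_erase_add Finset.univ (fun i => (p i) ^ 2) hmem
      rw [← hpc] at this
      rw [hθj]; linarith
    have hCS := sq_sum_le_card_mul_sum_sq (s := Finset.univ.erase j) (f := p)
    rw [hsum1, hsum2] at hCS
    rw [hcard] at hCS
    have hk1 : (1:ℝ) ≤ (k:ℝ) - 1 := by
      have : (2:ℝ) ≤ (k:ℝ) := by exact_mod_cast hk
      linarith
    have hsq : ((k:ℝ) * θ - 1) ^ 2 ≤ ((k:ℝ) - 1) * (pc * k - 1) := by
      have h2 : (k:ℝ) * ((1 - θ) ^ 2) ≤ (k:ℝ) * (((k:ℝ) - 1) * (pc - θ ^ 2)) :=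
        mul_le_mul_of_nonneg_left hCS (by positivity)
      linarith
    have hs : (k:ℝ) * θ - 1 ≤ Real.sqrt (((k:ℝ) - 1) * (pc * k - 1)) := by
      calc (k:ℝ) * θ - 1 ≤ |(k:ℝ) * θ - 1| := le_abs_self _
        _ = Real.sqrt (((k:ℝ) * θ - 1) ^ 2) := (Real.sqrt_sq_eq_abs _).symm
        _ ≤ Real.sqrt (((k:ℝ) - 1) * (pc * k - 1)) := Real.sqrt_le_sqrt hsq
    rw [le_div_iff₀ hkpos]
    linarith [hs]
end

section
/- Given a collision probability p_c, the min-entropy of any distribution p on k outcomes with Σᵢ p_i² = p_c satisfies -log₂ θ̂ ≤ H_∞(p) ≤ -log₂ ψ, where θ̂ = (√((k-1)(p_c k - 1)) + 1)/k and ψ = (√(n(p_c(n+1)-1)) + n)/(n(n+1)) with n = ⌊1/p_c⌋. -/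
open Finset Real

set_option maxHeartbeats 1000000

lemma floor_step (M t x : ℝ) (hM : 0 < M) (ht : 0 ≤ t) (hx0 : 0 ≤ x) (hxM : x ≤ M) :
    (⌊t / M⌋₊ : ℝ) * M ^ 2 + (t - ⌊t / M⌋₊ * M) ^ 2 + x ^ 2
      ≤ (⌊(t + x) / M⌋₊ : ℝ) * M ^ 2 + (t + x - ⌊(t + x) / M⌋₊ * M) ^ 2 := by
  set m := ⌊t / M⌋₊ with hm
  set m' := ⌊(t + x) / M⌋₊ with hm'
  have hfl : (m : ℝ) ≤ t / M := Nat.floor_le (div_nonneg ht hM.le)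
  have h1 : (m : ℝ) * M ≤ t := by
    calc (m : ℝ) * M ≤ t / M * M := by nlinarith
    _ = t := by field_simp
  have h2 : t < ((m : ℝ) + 1) * M := by
    have := Nat.lt_floor_add_one (t / M)
    calc t = t / M * M := by field_simp
    _ < ((m : ℝ) + 1) * M := by nlinarith
  have hdle : t / M ≤ (t + x) / M := by gcongr; linarith
  have hmm' : m ≤ m' := Nat.floor_le_floor hdle
  have hm'm : m' ≤ m + 1 := by
    have hle : (t + x) / M ≤ t / M + 1 := by
      rw [add_div]
      have : x / M ≤ 1 := (div_le_one hM).mpr hxM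
      linarith
    have := Nat.floor_le_floor hle
    rwa [Nat.floor_add_one (div_nonneg ht hM.le)] at this
  rcases eq_or_lt_of_le hmm' with h | h
  · rw [← h]
    nlinarith
  · have hEq : m' = m + 1 := by omega
    rw [hEq]
    have h3 : ((m : ℝ) + 1) * M ≤ t + x := by
      have hfl' : ((m' : ℕ) : ℝ) ≤ (t + x) / M := Nat.floor_le (div_nonneg (by linarith) hM.le)
      rw [hEq] at hfl'
      push_cast at hfl'
      calc ((m : ℝ) + 1) * M ≤ (t + x) / M * M := by nlinarith
      _ = t + x := by field_simp
    push_cast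
    nlinarith

lemma sum_sq_le_floor {ι : Type*} (M : ℝ) (hM : 0 < M) (s : Finset ι) (p : ι → ℝ)
    (h0 : ∀ i ∈ s, 0 ≤ p i) (h1 : ∀ i ∈ s, p i ≤ M) :
    ∑ i ∈ s, p i ^ 2
      ≤ (⌊(∑ i ∈ s, p i) / M⌋₊ : ℝ) * M ^ 2
        + ((∑ i ∈ s, p i) - ⌊(∑ i ∈ s, p i) / M⌋₊ * M) ^ 2 := by
  induction s using Finset.cons_induction with
  | empty => simp
  | cons a s ha ih =>
    have h0' : ∀ i ∈ s, 0 ≤ p i := fun i hi => h0 i (mem_cons_of_mem hi)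
    have h1' : ∀ i ∈ s, p i ≤ M := fun i hi => h1 i (mem_cons_of_mem hi)
    have hT : 0 ≤ ∑ i ∈ s, p i := Finset.sum_nonneg h0'
    have hpa0 : 0 ≤ p a := h0 a (mem_cons_self a s)
    have hpaM : p a ≤ M := h1 a (mem_cons_self a s)
    rw [Finset.sum_cons, Finset.sum_cons]
    have key := floor_step M (∑ i ∈ s, p i) (p a) hM hT hpa0 hpaM
    have := ih h0' h1'
    have hco : (∑ i ∈ s, p i) + p a = p a + ∑ i ∈ s, p i := by ring
    rw [hco] at key
    linarith

/-- Sharp lower and upper bounds on the min-entropy in terms of the collision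
probability: `-log₂ θ̂ ≤ H_∞(p) ≤ -log₂ ψ`. -/
theorem min_entropy_sharp_bounds (k : ℕ) (hk : 2 ≤ k) (p : Fin k → ℝ)
    (hp0 : ∀ i, 0 ≤ p i) (hp1 : ∑ i, p i = 1)
    (pc : ℝ) (hpc : pc = ∑ i, (p i) ^ 2) (n : ℕ) (hn : n = ⌊1 / pc⌋₊) :
    -Real.logb 2 ((Real.sqrt (((k : ℝ) - 1) * (pc * k - 1)) + 1) / k)
        ≤ -Real.logb 2 (⨆ i, p i) ∧
    -Real.logb 2 (⨆ i, p i)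
        ≤ -Real.logb 2
            ((Real.sqrt ((n : ℝ) * (pc * ((n : ℝ) + 1) - 1)) + n) / ((n : ℝ) * ((n : ℝ) + 1))) := by
  have hk0 : 0 < k := by omega
  haveI : NeZero k := ⟨by omega⟩
  set M : ℝ := ⨆ i, p i with hMdef
  -- the max is attained
  obtain ⟨i₀, -, hi₀⟩ := Finset.exists_max_image (univ : Finset (Fin k)) p ⟨0, mem_univ 0⟩
  have hle : ∀ i, p i ≤ p i₀ := fun i => hi₀ i (mem_univ i)
  have hMeq : M = p i₀ := le_antisymm (ciSup_le hle) (le_ciSup (Set.Finite.bddAbove (Set.finite_range p)) i₀)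
  have hMle : ∀ i, p i ≤ M := by rw [hMeq]; exact hle
  have hM1 : M ≤ 1 := by
    rw [hMeq, ← hp1]
    exact Finset.single_le_sum (fun i _ => hp0 i) (mem_univ i₀)
  have hMpos : 0 < M := by
    by_contra h
    push_neg at h
    have : ∑ i, p i ≤ 0 := Finset.sum_nonpos fun i _ => (hMle i).trans h
    linarith [hp1 ▸ this]
  have hpcM : pc ≤ M := by
    rw [hpc]
    calc ∑ i, p i ^ 2 ≤ ∑ i, M * p i :=
          Finset.sum_le_sum fun i _ => by nlinarith [hp0 i, hMle i]
    _ = M := by rw [← Finset.mul_sum, hp1, mul_one]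
  have hpcpos : 0 < pc := by
    rw [hpc]
    have : M ^ 2 ≤ ∑ i, p i ^ 2 := by
      rw [hMeq]
      exact Finset.single_le_sum (fun i _ => sq_nonneg (p i)) (mem_univ i₀)
    nlinarith
  have hpc1 : pc ≤ 1 := hpcM.trans hM1
  constructor
  · -- upper bound on M : M ≤ θ̂
    set θ : ℝ := (Real.sqrt (((k : ℝ) - 1) * (pc * k - 1)) + 1) / k with hθ
    have hCS : ((1 : ℝ) - M) ^ 2 ≤ ((k : ℝ) - 1) * (pc - M ^ 2) := by
      have hcard : ((univ.erase i₀).card : ℝ) = (k : ℝ) - 1 := by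
        rw [Finset.card_erase_of_mem (mem_univ i₀)]
        simp [Nat.cast_sub (by omega : 1 ≤ k)]
      have hsum1 : ∑ i ∈ univ.erase i₀, p i = 1 - M := by
        have := Finset.sum_erase_add univ p (mem_univ i₀)
        rw [hMeq]; linarith [hp1 ▸ this]
      have hsum2 : ∑ i ∈ univ.erase i₀, p i ^ 2 = pc - M ^ 2 := by
        have := Finset.sum_erase_add univ (fun i => p i ^ 2) (mem_univ i₀)
        rw [hMeq, hpc]
        linarith
      have := sq_sum_le_card_mul_sum_sq (s := univ.erase i₀) (f := p)
      rw [hsum1, hsum2, hcard] at this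
      exact this
    have hquad : ((k : ℝ) * M - 1) ^ 2 ≤ ((k : ℝ) - 1) * (pc * k - 1) := by
      have hkR : (2 : ℝ) ≤ (k : ℝ) := by exact_mod_cast hk
      nlinarith [hCS]
    have hsq : (k : ℝ) * M - 1 ≤ Real.sqrt (((k : ℝ) - 1) * (pc * k - 1)) := by
      have h1 := Real.sqrt_le_sqrt hquad
      rw [Real.sqrt_sq_eq_abs] at h1
      calc (k : ℝ) * M - 1 ≤ |(k : ℝ) * M - 1| := le_abs_self _
      _ ≤ _ := h1
    have hMθ : M ≤ θ := by
      rw [hθ, le_div_iff₀ (by exact_mod_cast hk0)]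
      linarith
    have hθpos : 0 < θ := lt_of_lt_of_le hMpos hMθ
    have := Real.logb_le_logb_of_le (by norm_num : (1:ℝ) < 2) hMpos hMθ
    linarith
  · -- lower bound on M : ψ ≤ M
    set D : ℝ := (n : ℝ) * (pc * ((n : ℝ) + 1) - 1) with hD
    set ψ : ℝ := (Real.sqrt D + n) / ((n : ℝ) * ((n : ℝ) + 1)) with hψ
    have hn1 : 1 ≤ n := by
      rw [hn]
      exact Nat.le_floor (by rw [Nat.cast_one]; exact one_le_one_div hpcpos hpc1)
    have hnR : (1 : ℝ) ≤ (n : ℝ) := by exact_mod_cast hn1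
    have hfl1 : (n : ℝ) * pc ≤ 1 := by
      have : (n : ℝ) ≤ 1 / pc := hn ▸ Nat.floor_le (by positivity)
      calc (n : ℝ) * pc ≤ 1 / pc * pc := by nlinarith
      _ = 1 := by field_simp
    have hfl2 : 1 < pc * ((n : ℝ) + 1) := by
      have h := Nat.lt_floor_add_one (1 / pc)
      rw [← hn] at h
      calc 1 = 1 / pc * pc := by field_simp
      _ < ((n : ℝ) + 1) * pc := by nlinarith
      _ = pc * ((n : ℝ) + 1) := by ring
    have hD0 : 0 ≤ D := by rw [hD]; nlinarith
    have hsqD0 : 0 ≤ Real.sqrt D := Real.sqrt_nonneg D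
    have hsqD1 : Real.sqrt D ≤ 1 := by
      have hD1 : D ≤ 1 := by
        rw [hD]
        nlinarith [mul_le_mul_of_nonneg_right hfl1 (by linarith : (0:ℝ) ≤ (n:ℝ) + 1)]
      calc Real.sqrt D ≤ Real.sqrt 1 := Real.sqrt_le_sqrt hD1
      _ = 1 := Real.sqrt_one
    have hψpos : 0 < ψ := by rw [hψ]; positivity
    have hψn : ψ ≤ 1 / (n : ℝ) := by
      rw [hψ, div_le_div_iff₀ (by positivity) (by positivity)]
      nlinarith
    have hM1n : 1 < ((n : ℝ) + 1) * M := by nlinarith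
    have hψM : ψ ≤ M := by
      rcases le_or_gt ((n : ℝ) * M) 1 with hc | hc
      · -- key case: ⌊1/M⌋ = n
        have hfloorM : ⌊1 / M⌋₊ = n := by
          rw [Nat.floor_eq_iff (by positivity)]
          constructor
          · rw [le_div_iff₀ hMpos]; linarith
          · rw [div_lt_iff₀ hMpos]; push_cast; linarith
        have hkey := sum_sq_le_floor M hMpos univ p (fun i _ => hp0 i) (fun i _ => hMle i)
        rw [hp1, hfloorM, ← hpc] at hkey
        -- pc ≤ n M² + (1 - n M)²
        have hnn1 : (0:ℝ) ≤ (n : ℝ) * ((n : ℝ) + 1) := by positivity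
        have hD' : D ≤ ((n : ℝ) * ((n : ℝ) + 1) * M - n) ^ 2 := by
          rw [hD]
          nlinarith [mul_nonneg hnn1 (by linarith :
            (0:ℝ) ≤ (n : ℝ) * M ^ 2 + (1 - (n : ℝ) * M) ^ 2 - pc)]
        have hsq : Real.sqrt D ≤ (n : ℝ) * ((n : ℝ) + 1) * M - n := by
          have h1 := Real.sqrt_le_sqrt hD'
          rw [Real.sqrt_sq (by nlinarith)] at h1
          exact h1
        rw [hψ, div_le_iff₀ (by positivity)]
        linarith
      · calc ψ ≤ 1 / (n : ℝ) := hψn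
        _ ≤ M := by rw [div_le_iff₀ (by positivity)]; linarith
    have := Real.logb_le_logb_of_le (by norm_num : (1:ℝ) < 2) hψpos hψM
    linarith
end
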